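/- arXiv:2402.12926 — 5 statements merged into one kernel-verified Lean document; each statement's English description precedes it below -/
import Mathlib

section
/- For all j, i ≥ 0, s_j ≤ C(j, i) · s_i · s_{j−i} for every 0 ≤ i ≤ j, where s_n are the Euler zigzag numbers. -/
/-- The counter `σ(G)` of a finite simple digraph given by the arc relation `A`. -/
noncomputable def digraphCounter {V : Type*} [Fintype V] (A : V → V → Prop) : ℕ :=
  Nat.card {f : V ≃ Fin (Fintype.card V) // ∀ u v, A u v → (f v : ℕ) < (f u : ℕ)}

/-- The arc relation of the staircase digraph `S_n` on vertices `v₁,…,v_n`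
(here `0`-indexed): arcs `v₁→v₂, v₃→v₂, v₃→v₄, v₅→v₄, …`, i.e. each even-indexed
(0-based) vertex points to its neighbours. -/
def staircaseArc (n : ℕ) : Fin n → Fin n → Prop :=
  fun a b => Even (a : ℕ) ∧ ((b : ℕ) = (a : ℕ) + 1 ∨ (b : ℕ) + 1 = (a : ℕ))

/-- The Euler zigzag numbers, realized as counters of staircase digraphs
(`s₀ = s₁ = 1, 1, 2, 5, 16, 61, …`). -/
noncomputable def zigzag (n : ℕ) : ℕ := digraphCounter (staircaseArc n)

/-!
Restrict a decreasing labeling of a digraph on `V₁ ⊕ V₂` to each block and replace the labels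
there by their ranks: this gives decreasing labelings of the two induced subdigraphs, and together
with the set of labels used on `V₁` they determine the original labeling. Hence
`σ(G) ≤ C(|V|, |V₁|) σ(G[V₁]) σ(G[V₂])`. Cutting `S_{m+n}` after its first `m` vertices leaves
`S_m` and either `S_n` or `S_n` with all arcs reversed (according to the parity of `m`), and
reversing all arcs does not change the counter.
-/

open Finset Function

section Counter

variable {V W : Type*} [Fintype V] [Fintype W]

abbrev DecreasingLabeling (A : V → V → Prop) :=
  {f : V ≃ Fin (Fintype.card V) // ∀ u v, A u v → (f v : ℕ) < (f u : ℕ)}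

theorem digraphCounter_congr (e : V ≃ W) {A : V → V → Prop} {B : W → W → Prop}
    (hAB : ∀ u v, B (e u) (e v) ↔ A u v) : digraphCounter B = digraphCounter A :=
  Nat.card_congr <| Equiv.subtypeEquiv (e.equivCongr (finCongr (Fintype.card_congr e))).symm
    fun f => ⟨fun hf u v huv => by simpa using hf _ _ ((hAB u v).mpr huv),
      fun hf u v huv => by
        simpa using hf _ _ ((hAB (e.symm u) (e.symm v)).mp (by simpa using huv))⟩

theorem digraphCounter_flip (A : V → V → Prop) : digraphCounter (flip A) = digraphCounter A :=
  Nat.card_congr <| Equiv.subtypeEquiv (Equiv.refl _ |>.equivCongr Fin.revPerm) fun _ =>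
    ⟨fun hf u v huv => Fin.rev_lt_rev.mpr (hf v u huv),
      fun hf u v huv => Fin.rev_lt_rev.mp (hf v u huv)⟩

end Counter

section Rank

variable {α W : Type*} [LinearOrder α] [Fintype W] {s : Finset α} (hs : #s = Fintype.card W)
  {g : W → α} (hg : Injective g) (hgs : ∀ w, g w ∈ s)

noncomputable def rankIn : W ≃ Fin (Fintype.card W) :=
  Equiv.ofBijective (fun w => (s.orderIsoOfFin hs).symm ⟨g w, hgs w⟩) <|
    (Fintype.bijective_iff_injective_and_card _).mpr
      ⟨fun _ _ huv => hg (Subtype.ext_iff.mp ((s.orderIsoOfFin hs).symm.injective huv)),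
        (Fintype.card_fin _).symm⟩

theorem orderEmbOfFin_rankIn (w : W) : s.orderEmbOfFin hs (rankIn hs hg hgs w) = g w := by
  simp [rankIn, ← coe_orderIsoOfFin_apply]

theorem rankIn_lt_rankIn_iff {u v : W} : rankIn hs hg hgs u < rankIn hs hg hgs v ↔ g u < g v := by
  rw [← (s.orderEmbOfFin hs).lt_iff_lt, orderEmbOfFin_rankIn, orderEmbOfFin_rankIn]

end Rank

theorem apply_eq_of_rankIn_eq {α W : Type*} [LinearOrder α] [Fintype W] {s t : Finset α}
    (hs : #s = Fintype.card W) (ht : #t = Fintype.card W) {g g' : W → α} (hg : Injective g)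
    (hg' : Injective g') (hgs : ∀ w, g w ∈ s) (hgt : ∀ w, g' w ∈ t) (hst : s = t) {w : W}
    (h : rankIn hs hg hgs w = rankIn ht hg' hgt w) : g w = g' w := by
  subst hst
  rw [← orderEmbOfFin_rankIn hs hg hgs, h, orderEmbOfFin_rankIn]

section Split

variable {V₁ V₂ : Type*} [Fintype V₁] {n : ℕ}

def leftLabels (f : V₁ ⊕ V₂ ≃ Fin n) : Finset (Fin n) := univ.image (f ∘ Sum.inl)

theorem card_leftLabels (f : V₁ ⊕ V₂ ≃ Fin n) : #(leftLabels f) = Fintype.card V₁ := by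
  rw [leftLabels, card_image_of_injective _ (f.injective.comp Sum.inl_injective), card_univ]

theorem apply_inl_mem_leftLabels (f : V₁ ⊕ V₂ ≃ Fin n) (a : V₁) :
    f (.inl a) ∈ leftLabels f :=
  mem_image_of_mem _ (mem_univ a)

theorem apply_inr_mem_compl_leftLabels (f : V₁ ⊕ V₂ ≃ Fin n) (b : V₂) :
    f (.inr b) ∈ (leftLabels f)ᶜ := by
  simp [leftLabels]

variable [Fintype V₂]

theorem card_compl_leftLabels (f : V₁ ⊕ V₂ ≃ Fin n) :
    #(leftLabels f)ᶜ = Fintype.card V₂ := by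
  have hn : n = Fintype.card V₁ + Fintype.card V₂ := by
    rw [← Fintype.card_sum, Fintype.card_congr f, Fintype.card_fin]
  rw [card_compl, card_leftLabels, Fintype.card_fin]
  omega

variable (A : V₁ ⊕ V₂ → V₁ ⊕ V₂ → Prop)

noncomputable def splitLabeling (f : DecreasingLabeling A) :
    {s : Finset (Fin (Fintype.card (V₁ ⊕ V₂))) // #s = Fintype.card V₁} ×
      DecreasingLabeling (fun a b => A (.inl a) (.inl b)) ×
      DecreasingLabeling (fun a b => A (.inr a) (.inr b)) :=
  ⟨⟨leftLabels f.1, card_leftLabels f.1⟩,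
    ⟨rankIn (card_leftLabels f.1) (f.1.injective.comp Sum.inl_injective)
      (apply_inl_mem_leftLabels f.1),
      fun _ _ hab => (rankIn_lt_rankIn_iff ..).mpr (f.2 _ _ hab)⟩,
    ⟨rankIn (card_compl_leftLabels f.1) (f.1.injective.comp Sum.inr_injective)
      (apply_inr_mem_compl_leftLabels f.1),
      fun _ _ hab => (rankIn_lt_rankIn_iff ..).mpr (f.2 _ _ hab)⟩⟩

theorem splitLabeling_injective : Injective (splitLabeling A) := by
  intro f f' h
  have hS : leftLabels f.1 = leftLabels f'.1 := congrArg (fun t => t.1.1) h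
  refine Subtype.ext (Equiv.ext fun x => ?_)
  rcases x with a | b
  · exact apply_eq_of_rankIn_eq _ _ (f.1.injective.comp Sum.inl_injective)
      (f'.1.injective.comp Sum.inl_injective) _ _ hS (congrArg (fun t => t.2.1.1 a) h)
  · exact apply_eq_of_rankIn_eq _ _ (f.1.injective.comp Sum.inr_injective)
      (f'.1.injective.comp Sum.inr_injective) _ _ (congrArg compl hS)
      (congrArg (fun t => t.2.2.1 b) h)

theorem digraphCounter_le_choose_mul_mul :
    digraphCounter A ≤ (Fintype.card V₁ + Fintype.card V₂).choose (Fintype.card V₁) *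
      digraphCounter (fun a b => A (.inl a) (.inl b)) *
      digraphCounter (fun a b => A (.inr a) (.inr b)) := by
  calc digraphCounter A = Nat.card (DecreasingLabeling A) := rfl
    _ ≤ _ := Nat.card_le_card_of_injective _ (splitLabeling_injective A)
    _ = _ := by
      rw [Nat.card_prod, Nat.card_prod, Nat.card_eq_fintype_card, Fintype.card_finset_len,
        Fintype.card_fin, Fintype.card_sum, mul_assoc]
      rfl

end Split

section Staircase

variable {m n : ℕ}

theorem staircaseArc_natAdd_of_even (hm : Even m) (a b : Fin n) :
    staircaseArc (m + n) (Fin.natAdd m a) (Fin.natAdd m b) ↔ staircaseArc n a b := by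
  obtain ⟨r, rfl⟩ := hm
  simp only [staircaseArc, Fin.val_natAdd, Nat.even_iff]
  omega

theorem staircaseArc_natAdd_of_odd (hm : Odd m) (a b : Fin n) :
    staircaseArc (m + n) (Fin.natAdd m a) (Fin.natAdd m b) ↔ staircaseArc n b a := by
  obtain ⟨r, rfl⟩ := hm
  simp only [staircaseArc, Fin.val_natAdd, Nat.even_iff]
  omega

theorem digraphCounter_staircaseArc_natAdd (m n : ℕ) :
    digraphCounter (fun a b : Fin n => staircaseArc (m + n) (Fin.natAdd m a) (Fin.natAdd m b)) =
      zigzag n := by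
  rcases Nat.even_or_odd m with hm | hm
  · exact digraphCounter_congr (Equiv.refl _) (staircaseArc_natAdd_of_even hm)
  · rw [zigzag, ← digraphCounter_flip]
    exact digraphCounter_congr (Equiv.refl _) fun a b => staircaseArc_natAdd_of_odd hm b a

theorem zigzag_add_le (m n : ℕ) : zigzag (m + n) ≤ (m + n).choose m * zigzag m * zigzag n :=
  calc zigzag (m + n)
      = digraphCounter fun a b : Fin m ⊕ Fin n =>
          staircaseArc (m + n) (finSumFinEquiv a) (finSumFinEquiv b) :=
        digraphCounter_congr (B := staircaseArc (m + n)) finSumFinEquiv fun _ _ => Iff.rfl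
    _ ≤ _ := digraphCounter_le_choose_mul_mul _
    _ = _ := by
      simp only [Fintype.card_fin, finSumFinEquiv_apply_left, finSumFinEquiv_apply_right,
        digraphCounter_staircaseArc_natAdd]
      rfl

end Staircase

/-- `s_j ≤ C(j,i)·s_i·s_{j−i}` for all `0 ≤ i ≤ j`. -/
theorem zigzag_le (j i : ℕ) (h : i ≤ j) :
    zigzag j ≤ j.choose i * zigzag i * zigzag (j - i) := by
  obtain ⟨k, rfl⟩ := Nat.exists_eq_add_of_le h
  simpa using zigzag_add_le i k
end

section
/- For every j ≥ 0, the formal power series identity ∑_{i=0}^{∞} (C(i+j, i)/i!) X^i = L_j(−X) · exp(X) holds, where L_j is the j-th Laguerre polynomial. -/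
/-!
Both `L_j(−X) = ∑ C(j,k) X^k/k!` and `exp X = ∑ X^k/k!` are exponential generating functions,
and the product of exponential generating functions is the exponential generating function of
the binomial convolution. The convolution of `k ↦ C(j,k)` with the constant sequence `1` is
`∑_k C(n,k) C(j,k) = C(n+j,n)` by Vandermonde's identity.
-/

open Polynomial PowerSeries

/-- The `j`-th Laguerre polynomial `L_j(X) = ∑_{k=0}^{j} C(j,k)(−X)^k/k!`. -/
noncomputable def laguerre (j : ℕ) : Polynomial ℚ :=
  ∑ k ∈ Finset.range (j + 1), Polynomial.C ((j.choose k : ℚ) / k.factorial) * (-Polynomial.X) ^ k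

open Finset Nat

namespace PowerSeries

theorem exp_eq_mk_one_div_factorial {A : Type*} [DivisionRing A] [Algebra ℚ A] :
    exp A = mk fun n => 1 / (n ! : A) := by
  ext n
  simp

theorem mk_div_factorial_mul_mk_div_factorial {K : Type*} [Field K] [CharZero K] (a b : ℕ → K) :
    (mk fun n => a n / n !) * (mk fun n => b n / n !) =
      mk fun n => (∑ p ∈ antidiagonal n, n.choose p.1 * (a p.1 * b p.2)) / n ! := by
  ext n
  rw [coeff_mul, coeff_mk, sum_div]
  refine sum_congr rfl ?_
  rintro ⟨k, l⟩ hkl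
  obtain rfl := mem_antidiagonal.mp hkl
  rw [coeff_mk, coeff_mk, Nat.cast_add_choose]
  have : ((k + l)! : K) ≠ 0 := Nat.cast_ne_zero.2 (factorial_ne_zero _)
  field_simp

end PowerSeries

theorem laguerre_comp_neg_X_eq_mk (j : ℕ) :
    (((laguerre j).comp (-Polynomial.X) : ℚ[X]) : PowerSeries ℚ) =
      mk fun n => (j.choose n : ℚ) / n ! := by
  ext n
  simp only [laguerre, Polynomial.sum_comp, Polynomial.mul_comp, Polynomial.pow_comp,
    Polynomial.C_comp, Polynomial.neg_comp, Polynomial.X_comp, neg_neg, coeff_mk,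
    Polynomial.coeff_coe, Polynomial.finsetSum_coeff, Polynomial.coeff_C_mul_X_pow]
  rw [Finset.sum_ite_eq, ite_eq_left_iff, mem_range, not_lt]
  intro hjn
  rw [choose_eq_zero_of_lt hjn, Nat.cast_zero, zero_div]

/-- The tabloidal form: `∑_{i≥0} (C(i+j,i)/i!) X^i = L_j(−X)·exp(X)` as formal power series. -/
theorem tabloidal_laguerre (j : ℕ) :
    PowerSeries.mk (fun i => ((i + j).choose i : ℚ) / i.factorial) =
      ((laguerre j).comp (-Polynomial.X) : Polynomial ℚ) * PowerSeries.exp ℚ := by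
  rw [laguerre_comp_neg_X_eq_mk, exp_eq_mk_one_div_factorial,
    mk_div_factorial_mul_mk_div_factorial]
  congr! 2 with n
  congr 1
  rw [add_comm, Nat.add_choose_eq]
  push_cast
  refine Finset.sum_congr rfl fun p hp => ?_
  rw [choose_symm_of_eq_add (mem_antidiagonal.mp hp).symm]
  ring
end

section
/- Define a_{j,k} by the recurrence a_{j,0} = (j+1)!, a_{j,k} = 0 for k < 0 or k > j, and k·a_{j,k} = j(k·a_{j−1,k} + a_{j−1,k−1}) for j ≥ 1. Then a_{j,k} = C(j,k) · C(j+1, k+1) · (j−k)! for all 0 ≤ k ≤ j. -/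
lemma coeff_companion_key (m d : ℕ) :
    ((m+1 : ℕ):ℚ) * (((m+1+d+1).choose (m+1) : ℚ) * (((m+1+d+1+1)).choose (m+1+1) : ℚ) * (d+1).factorial) =
    ((m+1+d+1 : ℕ):ℚ) * (((m+1:ℕ):ℚ) * (((m+1+d).choose (m+1):ℚ) * ((m+1+d+1).choose (m+1+1):ℚ) * d.factorial)
      + ((m+1+d).choose m : ℚ) * ((m+1+d+1).choose (m+1):ℚ) * (d+1).factorial) := by
  simp only [show m+1+d = m+d+1 from by omega, show m+1+1 = m+2 from by omega]
  simp only [show m+d+1+1 = m+d+2 from by omega]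
  simp only [show m+d+2+1 = m+d+3 from by omega]
  rw [Nat.cast_choose ℚ (by omega : m+1 ≤ m+d+2), Nat.cast_choose ℚ (by omega : m+2 ≤ m+d+3),
      Nat.cast_choose ℚ (by omega : m+1 ≤ m+d+1), Nat.cast_choose ℚ (by omega : m+2 ≤ m+d+2),
      Nat.cast_choose ℚ (by omega : m ≤ m+d+1)]
  have e1 : m+d+2-(m+1) = d+1 := by omega
  have e2 : m+d+3-(m+2) = d+1 := by omega
  have e3 : m+d+1-(m+1) = d := by omega
  have e4 : m+d+2-(m+2) = d := by omega
  have e5 : m+d+1-m = d+1 := by omega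
  rw [e1, e2, e3, e4, e5]
  have f1 : ((m+d+3).factorial : ℚ) = (m+d+3)*((m+d+2)*(m+d+1).factorial) := by
    push_cast [show m+d+3 = (m+d+2)+1 from rfl, Nat.factorial_succ, show m+d+2 = (m+d+1)+1 from rfl]; ring
  have f2 : ((m+d+2).factorial : ℚ) = (m+d+2)*(m+d+1).factorial := by
    push_cast [show m+d+2 = (m+d+1)+1 from rfl, Nat.factorial_succ]; ring
  have f3 : ((m+2).factorial : ℚ) = (m+2)*((m+1)*m.factorial) := by
    push_cast [Nat.factorial_succ]; ring
  have f4 : ((m+1).factorial : ℚ) = (m+1)*m.factorial := by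
    push_cast [Nat.factorial_succ]; ring
  have f5 : ((d+1).factorial : ℚ) = (d+1)*d.factorial := by
    push_cast [Nat.factorial_succ]; ring
  rw [f1, f2, f3, f4, f5]
  have h1 : (m.factorial : ℚ) ≠ 0 := by positivity
  have h2 : (d.factorial : ℚ) ≠ 0 := by positivity
  have h3 : ((m+d+1).factorial : ℚ) ≠ 0 := by positivity
  push_cast
  field_simp
  ring

/-- If `a_{j,0} = (j+1)!`, `a_{j,k} = 0` for `k > j`, and
`k·a_{j,k} = j(k·a_{j−1,k} + a_{j−1,k−1})` for `j, k ≥ 1`, then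
`a_{j,k} = C(j,k)·C(j+1,k+1)·(j−k)!` for all `0 ≤ k ≤ j`. -/
theorem coeff_companion_empty (a : ℕ → ℕ → ℚ)
    (h0 : ∀ j, a j 0 = (j + 1).factorial)
    (htop : ∀ j k, j < k → a j k = 0)
    (hrec : ∀ (j k : ℕ), 1 ≤ j → 1 ≤ k →
      (k : ℚ) * a j k = (j : ℚ) * ((k : ℚ) * a (j - 1) k + a (j - 1) (k - 1))) :
    ∀ j k, k ≤ j →
      a j k = (j.choose k : ℚ) * ((j + 1).choose (k + 1) : ℚ) * (j - k).factorial := by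
  intro j
  induction j with
  | zero =>
    intro k hk
    interval_cases k
    simp [h0 0, Nat.factorial]
  | succ n ih =>
    intro k hk
    match k with
    | 0 =>
      rw [h0 (n+1)]
      norm_num [Nat.choose_one_right, Nat.factorial_succ]
    | m+1 =>
      have hm : m ≤ n := by omega
      have hr := hrec (n+1) (m+1) (by omega) (by omega)
      simp only [Nat.add_sub_cancel] at hr
      rcases Nat.lt_or_ge m n with hlt | hge
      · -- m + 1 ≤ n
        obtain ⟨d, rfl⟩ : ∃ d, n = m+1+d := ⟨n-(m+1), by omega⟩
        have h1 := ih (m+1) (by omega)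
        have h2 := ih m (by omega)
        rw [show m+1+d-(m+1) = d from by omega] at h1
        rw [show m+1+d-m = d+1 from by omega] at h2
        rw [show m+1+d+1-(m+1) = d+1 from by omega]
        apply mul_left_cancel₀ (show ((m+1:ℕ):ℚ) ≠ 0 by positivity)
        rw [hr, h1, h2]
        exact (coeff_companion_key m d).symm
      · -- m = n
        have hmn : m = n := by omega
        subst hmn
        have h1 := ih m le_rfl
        have h2 := htop m (m+1) (by omega)
        rw [h1, h2, Nat.sub_self, Nat.choose_self, Nat.choose_self] at hr
        rw [show m+1-(m+1) = 0 from by omega, Nat.choose_self, Nat.choose_self]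
        have hne : ((m+1:ℕ):ℚ) ≠ 0 := by positivity
        field_simp at hr ⊢
        nlinarith [hr]
end

section
/- For nonnegative integers i, j, n with j ≤ n: ∫₀^∞ X^i · (dʲ/dXʲ L_n)(X) · e^{−X} dX = (−1)ⁿ · (n−j+1)_j · (i−n+1)_{n−j} · (n+1)_{i−n}, where (z)_m denotes the rising factorial (Pochhammer symbol); and the integral is 0 when j > n. In particular, the integral vanishes whenever j ≤ i < n. -/
open Polynomial MeasureTheory

/-- The `n`-th Laguerre polynomial over `ℝ`: `L_n(X) = ∑_{k=0}^{n} C(n,k)(−X)^k/k!`. -/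
noncomputable def laguerreR (n : ℕ) : Polynomial ℝ :=
  ∑ k ∈ Finset.range (n + 1), C ((n.choose k : ℝ) / k.factorial) * (-X) ^ k

/-- The Pochhammer symbol (rising factorial) `(z)_m` for an integer index `m`, with
`(z)_m = z(z+1)⋯(z+m−1)` for `m ≥ 0` and `(z)_{−k} = 1/((z−k)_k)` for `k > 0`. -/
noncomputable def poch (z : ℝ) (m : ℤ) : ℝ :=
  if 0 ≤ m then (ascPochhammer ℝ m.toNat).eval z
  else 1 / ((ascPochhammer ℝ (-m).toNat).eval (z + m))

/-! Expanding `D^j L_n` in monomials and integrating each one against `e^{-x}` via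
`Γ(k + 1) = k!` turns the integral into `(-1)^j ∑_m (-1)^m C(n, j+m) (i+m)!/m!`. Since
`(-1)^m (i+m)!/(i! m!)` is the generalized binomial coefficient `C(-i-1, m)`, Chu–Vandermonde
sums this to `(-1)^j i! C(n-i-1, n-j)`. The Pochhammer form follows from
`(i-n+1)_{n-j} = (-1)^{n-j} (n-j)! C(n-i-1, n-j)` and `(n+1)_{i-n} = i!/n!`, valid for both
signs of `i - n`. -/

open Finset

lemma laguerreR_eq_sum_C_mul_X_pow (n : ℕ) :
    laguerreR n =
      ∑ k ∈ range (n + 1), C ((-1) ^ k * n.choose k / k.factorial : ℝ) * X ^ k := by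
  refine sum_congr rfl fun k _ => ?_
  rw [neg_pow, ← mul_assoc, mul_div_assoc, C_mul, C_pow, C_neg, C_1, mul_comm (C _)]

lemma coeff_laguerreR (n k : ℕ) :
    (laguerreR n).coeff k = (-1) ^ k * n.choose k / k.factorial := by
  rw [laguerreR_eq_sum_C_mul_X_pow, finsetSum_coeff]
  simp_rw [coeff_C_mul_X_pow]
  rw [sum_ite_eq]
  split_ifs with hk
  · rfl
  · rw [Nat.choose_eq_zero_of_lt (by simpa using hk)]
    simp

lemma natDegree_laguerreR_le (n : ℕ) : (laguerreR n).natDegree ≤ n := by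
  rw [laguerreR_eq_sum_C_mul_X_pow]
  refine natDegree_sum_le_of_forall_le _ _ fun k hk => (natDegree_C_mul_X_pow_le _ _).trans ?_
  exact Nat.lt_succ_iff.mp (mem_range.mp hk)

lemma coeff_iterate_derivative_laguerreR (n j m : ℕ) :
    (derivative^[j] (laguerreR n)).coeff m = (-1) ^ (j + m) * n.choose (j + m) / m.factorial := by
  rw [coeff_iterate_derivative, coeff_laguerreR, nsmul_eq_mul, add_comm m j]
  have h := Nat.factorial_mul_descFactorial (Nat.le_add_right j m)
  rw [Nat.add_sub_cancel_left] at h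
  rw [eq_div_iff (by positivity), ← h]
  push_cast
  field_simp

lemma integrableOn_pow_mul_exp_neg (m : ℕ) :
    IntegrableOn (fun x : ℝ => x ^ m * Real.exp (-x)) (Set.Ioi 0) := by
  refine (Real.GammaIntegral_convergent (s := m + 1) (by positivity)).congr_fun
    (fun x _ => ?_) measurableSet_Ioi
  dsimp only
  rw [add_sub_cancel_right, Real.rpow_natCast, mul_comm]

lemma integral_pow_mul_exp_neg (m : ℕ) :
    ∫ x in Set.Ioi (0 : ℝ), x ^ m * Real.exp (-x) = m.factorial := by
  rw [← Real.Gamma_nat_eq_factorial, Real.Gamma_eq_integral (by positivity)]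
  refine setIntegral_congr_fun measurableSet_Ioi fun x _ => ?_
  rw [add_sub_cancel_right, Real.rpow_natCast, mul_comm]

lemma integral_pow_mul_eval_mul_exp_neg (p : ℝ[X]) (i : ℕ) {d : ℕ} (hp : p.natDegree < d) :
    ∫ x in Set.Ioi (0 : ℝ), x ^ i * p.eval x * Real.exp (-x) =
      ∑ m ∈ range d, p.coeff m * (i + m).factorial := by
  have hsum : ∀ x : ℝ, x ^ i * p.eval x * Real.exp (-x) =
      ∑ m ∈ range d, p.coeff m * (x ^ (i + m) * Real.exp (-x)) := fun x => by
    rw [eval_eq_sum_range' hp, mul_sum, sum_mul]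
    refine sum_congr rfl fun m _ => ?_
    ring
  simp_rw [hsum]
  rw [integral_finsetSum _ fun m _ => (integrableOn_pow_mul_exp_neg _).const_mul _]
  simp_rw [integral_const_mul, integral_pow_mul_exp_neg]

lemma ascPochhammer_eval_neg_eq_choose {R : Type*} [CommRing R] [BinomialRing R]
    (r : R) (k : ℕ) :
    (ascPochhammer R k).eval (-r) = (-1) ^ k * k.factorial * Ring.choose r k := by
  rw [ascPochhammer_eval_neg_eq_descPochhammer, descPochhammer_eval_eq_ascPochhammer,
    ← ascPochhammer_smeval_eq_eval, ← descPochhammer_smeval_eq_ascPochhammer,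
    Ring.descPochhammer_eq_factorial_smul_choose, nsmul_eq_mul, mul_assoc]

lemma sum_neg_one_pow_mul_choose_mul_factorial_div (i j N : ℕ) :
    ∑ m ∈ range (N + 1),
        (-1) ^ m * (j + N).choose (j + m) * ((i + m).factorial / m.factorial : ℝ) =
      i.factorial * Ring.choose ((j + N : ℕ) - (i + 1) : ℝ) N := by
  rw [sub_eq_neg_add, Ring.add_choose_eq N (Commute.all _ _),
    Nat.sum_antidiagonal_eq_sum_range_succ (fun a b => Ring.choose (-(i + 1 : ℝ)) a *
      Ring.choose ((j + N : ℕ) : ℝ) b), mul_sum]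
  refine sum_congr rfl fun m hm => ?_
  have hmN : m ≤ N := Nat.lt_succ_iff.mp (mem_range.mp hm)
  rw [Ring.choose_neg, Units.smul_def, zsmul_eq_mul, Int.cast_negOnePow_natCast,
    show (i + 1 : ℝ) + m - 1 = (i + m : ℕ) by push_cast; ring, Ring.choose_natCast,
    Ring.choose_natCast, Nat.choose_symm_of_eq_add (show j + N = (N - m) + (j + m) by omega),
    ← Nat.add_choose_mul_factorial_mul_factorial i m]
  push_cast
  field_simp

theorem integral_pow_mul_iterate_derivative_laguerreR (i j N : ℕ) :
    ∫ x in Set.Ioi (0 : ℝ),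
        x ^ i * (derivative^[j] (laguerreR (j + N))).eval x * Real.exp (-x) =
      (-1) ^ j * i.factorial * Ring.choose ((j + N : ℕ) - (i + 1) : ℝ) N := by
  have hdeg : (derivative^[j] (laguerreR (j + N))).natDegree < N + 1 :=
    Nat.lt_succ_of_le <| (natDegree_iterate_derivative _ _).trans <|
      (Nat.sub_le_sub_right (natDegree_laguerreR_le _) j).trans (by omega)
  rw [integral_pow_mul_eval_mul_exp_neg _ i hdeg, mul_assoc,
    ← sum_neg_one_pow_mul_choose_mul_factorial_div, mul_sum]
  refine sum_congr rfl fun m _ => ?_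
  rw [coeff_iterate_derivative_laguerreR, pow_add]
  ring

lemma poch_natCast (z : ℝ) (k : ℕ) : poch z k = (ascPochhammer ℝ k).eval z := by
  rw [poch, if_pos (Int.natCast_nonneg k), Int.toNat_natCast]

lemma ascPochhammer_eval_natCast_add_one (a k : ℕ) :
    (ascPochhammer ℝ k).eval ((a : ℝ) + 1) = (a + k).factorial / a.factorial := by
  rw [eq_div_iff (by positivity), ← Nat.cast_add_one, ← Nat.cast_ascFactorial,
    ← Nat.factorial_mul_ascFactorial, Nat.cast_mul, mul_comm]

lemma poch_natCast_add_one_sub (a b : ℕ) :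
    poch ((a : ℝ) + 1) ((b : ℤ) - a) = b.factorial / a.factorial := by
  rcases le_or_gt a b with hab | hab
  · rw [show (b : ℤ) - a = ((b - a : ℕ) : ℤ) by omega, poch_natCast,
      ascPochhammer_eval_natCast_add_one, Nat.add_sub_cancel' hab]
  · rw [poch, if_neg (by omega), show -((b : ℤ) - a) = ((a - b : ℕ) : ℤ) by omega,
      Int.toNat_natCast,
      show (a : ℝ) + 1 + (((b : ℤ) - a : ℤ) : ℝ) = (b : ℝ) + 1 by push_cast; ring,
      ascPochhammer_eval_natCast_add_one, Nat.add_sub_cancel' hab.le, one_div_div]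

theorem integral_pow_mul_iterate_derivative_laguerreR_eq_poch (i j n : ℕ) (hj : j ≤ n) :
    ∫ x in Set.Ioi (0 : ℝ),
        x ^ i * (derivative^[j] (laguerreR n)).eval x * Real.exp (-x) =
      (-1) ^ n * poch ((n : ℝ) - j + 1) j * poch ((i : ℝ) - n + 1) (n - j) *
        poch ((n : ℝ) + 1) ((i : ℤ) - n) := by
  obtain ⟨N, rfl⟩ := Nat.exists_eq_add_of_le hj
  have hneg : ((-1 : ℝ) ^ N) ^ 2 = 1 := by rw [← pow_mul, pow_mul', neg_one_sq, one_pow]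
  rw [integral_pow_mul_iterate_derivative_laguerreR, poch_natCast_add_one_sub,
    show ((j + N : ℕ) : ℝ) - j + 1 = N + 1 by push_cast; ring, poch_natCast,
    ascPochhammer_eval_natCast_add_one, show ((j + N : ℕ) : ℤ) - j = N by push_cast; ring,
    poch_natCast, show (i : ℝ) - (j + N : ℕ) + 1 = -((j + N : ℕ) - (i + 1)) by ring,
    ascPochhammer_eval_neg_eq_choose, add_comm N j, pow_add]
  field_simp
  rw [hneg, mul_one]

/-- `∫₀^∞ X^i (dʲ/dXʲ L_n)(X) e^{−X} dX = (−1)ⁿ (n−j+1)_j (i−n+1)_{n−j} (n+1)_{i−n}`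
for `j ≤ n`; the integral is `0` for `j > n`; and it vanishes whenever `j ≤ i < n`. -/
theorem integral_pow_deriv_laguerre (i j n : ℕ) :
    (j ≤ n →
      ∫ x in Set.Ioi (0 : ℝ),
          x ^ i * (Polynomial.derivative^[j] (laguerreR n)).eval x * Real.exp (-x) =
        (-1) ^ n * poch ((n : ℝ) - j + 1) j * poch ((i : ℝ) - n + 1) (n - j) *
          poch ((n : ℝ) + 1) ((i : ℤ) - n)) ∧
    (n < j →
      ∫ x in Set.Ioi (0 : ℝ),
          x ^ i * (Polynomial.derivative^[j] (laguerreR n)).eval x * Real.exp (-x) = 0) ∧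
    (j ≤ i → i < n →
      ∫ x in Set.Ioi (0 : ℝ),
          x ^ i * (Polynomial.derivative^[j] (laguerreR n)).eval x * Real.exp (-x) = 0) := by
  refine ⟨integral_pow_mul_iterate_derivative_laguerreR_eq_poch i j n, fun hnj => ?_,
    fun hji hin => ?_⟩
  · simp [iterate_derivative_eq_zero ((natDegree_laguerreR_le n).trans_lt hnj)]
  · have hpoch : poch ((i : ℝ) - n + 1) (n - j) = 0 := by
      rw [show (n : ℤ) - j = (n - j : ℕ) by omega, poch_natCast,
        show (i : ℝ) - n + 1 = -(n - i - 1 : ℕ) by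
          rw [Nat.cast_sub (by omega), Nat.cast_sub hin.le]; ring,
        ascPochhammer_eval_neg_coe_nat_of_lt (by omega)]
    rw [integral_pow_mul_iterate_derivative_laguerreR_eq_poch i j n (by omega), hpoch,
      mul_zero, zero_mul]
end

section
/- Let G be a finite simple digraph, and let i ≥ 1. For the equivalence relation R on vertices given by 'u R v iff u and v lie on a common directed closed walk', the number of non-strict dispositions of size i of G equals that of the quotient digraph G/R (with loops and multiple arcs removed). Here a non-strict disposition of size i is a map f : V → {1,…,i} with f(v₁) ≥ f(v₂) for every arc (v₁,v₂). -/
/-- The number `σ^{ns}_i(G)` of non-strict dispositions of size `i` of the digraph with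
arc relation `A`: maps `f : V → {1,…,i}` with `f v₂ ≤ f v₁` for every arc `(v₁,v₂)`. -/
noncomputable def nsCounter {V : Type*} (i : ℕ) (A : V → V → Prop) : ℕ :=
  Nat.card {f : V → Fin i // ∀ u v, A u v → f v ≤ f u}

/-- The equivalence relation "`u` and `v` lie on a common directed closed walk",
i.e. each is reachable from the other. -/
def walkSetoid {V : Type*} (A : V → V → Prop) : Setoid V where
  r u v := Relation.ReflTransGen A u v ∧ Relation.ReflTransGen A v u
  iseqv := ⟨fun _ => ⟨.refl, .refl⟩, fun h => ⟨h.2, h.1⟩,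
    fun h1 h2 => ⟨h1.1.trans h2.1, h2.2.trans h1.2⟩⟩

private lemma le_of_reflTransGen {V : Type*} {A : V → V → Prop} {i : ℕ} {f : V → Fin i}
    (hf : ∀ u v, A u v → f v ≤ f u) {u v : V} (h : Relation.ReflTransGen A u v) :
    f v ≤ f u := by
  induction h with
  | refl => exact le_refl _
  | tail _ h2 ih => exact (hf _ _ h2).trans ih

private lemma const_of_setoid {V : Type*} {A : V → V → Prop} {i : ℕ} {f : V → Fin i}
    (hf : ∀ u v, A u v → f v ≤ f u) {u v : V} (h : (walkSetoid A).r u v) :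
    f u = f v :=
  le_antisymm (le_of_reflTransGen hf h.2) (le_of_reflTransGen hf h.1)

/-- The number of non-strict dispositions of size `i` of a digraph equals that of its
quotient by the common-closed-walk relation (loops and multiplicities removed). -/
theorem nsCounter_quotient {V : Type*} [Fintype V] (A : V → V → Prop) (i : ℕ)
    (hi : 1 ≤ i) :
    nsCounter i A =
      nsCounter i (fun x y : Quotient (walkSetoid A) =>
        x ≠ y ∧ ∃ u v, A u v ∧ Quotient.mk (walkSetoid A) u = x ∧
          Quotient.mk (walkSetoid A) v = y) := by
  apply Nat.card_congr
  refine
    { toFun := fun f => ⟨Quotient.lift f.1 (fun u v h => const_of_setoid f.2 h), ?_⟩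
      invFun := fun g => ⟨g.1 ∘ Quotient.mk (walkSetoid A), ?_⟩
      left_inv := fun f => Subtype.ext rfl
      right_inv := fun g => Subtype.ext (funext fun x => Quotient.inductionOn x fun _ => rfl) }
  · rintro x y ⟨-, u, v, hA, rfl, rfl⟩
    exact f.2 u v hA
  · intro u v h
    by_cases heq : Quotient.mk (walkSetoid A) u = Quotient.mk (walkSetoid A) v
    · simp only [Function.comp_apply, heq, le_refl]
    · exact g.2 _ _ ⟨heq, u, v, h, rfl, rfl⟩
end
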